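/- For every k ≥ 1, the Cauchy polynomial j_k has the closed form j_k = Σ_{α ⊨ k} (−1)^{α(2)+α(4)+α(6)+⋯} · h(α) · ∏_i x_i^{α(i)}, the sum over all partition symbols α of k; equivalently, the coefficient of the monomial ∏_i x_i^{α(i)} in j_k equals (−1)^{α(2)+α(4)+⋯} h(α) for every partition symbol α of k, and the coefficient of every monomial not of this form is zero. -/

import Mathlib

open MvPolynomial

/-- The unique `ℚ`-linear derivation `δ` of `ℚ[x₁, x₂, …]` with `δ xₖ = k · xₖ₊₁`. -/
noncomputable def δ : Derivation ℚ (MvPolynomial ℕ ℚ) (MvPolynomial ℕ ℚ) :=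
  mkDerivation ℚ fun k => (k : MvPolynomial ℕ ℚ) * X (k + 1)

/-- The Cauchy polynomials: `j 1 = x₁` and `j (k+1) = x₁ · j k − δ (j k)`. -/
noncomputable def cauchyJ : ℕ → MvPolynomial ℕ ℚ
  | 0 => 1
  | k + 1 => X 1 * cauchyJ k - δ (cauchyJ k)

/-- The finite set of partition symbols of `k`: finitely supported functions
`α : ℕ → ℕ` with `α 0 = 0` and `∑ i, i · α i = k`. -/
noncomputable def partitionSymbols (k : ℕ) : Finset (ℕ →₀ ℕ) :=
  ((Finset.range (k + 1)).finsupp fun _ => Finset.range (k + 1)).filter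
    fun α => α 0 = 0 ∧ (α.sum fun i a => i * a) = k

/-- The Cauchy number `h(α) = k! / (∏ i, α i ! · i ^ α i)` of a partition symbol of `k`. -/
noncomputable def cauchyNumber (k : ℕ) (α : ℕ →₀ ℕ) : ℚ :=
  (k.factorial : ℚ) / (α.prod fun i a => (a.factorial : ℚ) * (i : ℚ) ^ a)

/-!
Write `j_k = k! • P_k` with `P_k = ∑_{α ⊨ k} ε(α) / z_α · x^α`, where `ε(α) = (-1)^{α 2 + α 4 + ⋯}`
and `z_α = ∏ i, α i! · i ^ α i`. Since `δ = ∑ i, i · x_{i+1} ∂/∂x_i`, the coefficient of `x^β` in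
`x₁ P_k - δ P_k` gets one contribution for every part size `j` of `β`: `j = 1` from `x₁ P_k`, and
`j ≥ 2` from `δ` turning a part `j - 1` into a part `j`. Adding a part `j` multiplies `z` by
`j · (multiplicity of j)` and `ε` by `(-1)^{j+1}`, so each contribution is `j β_j ε(β) / z_β`, and
they add up to `(k + 1) ε(β) / z_β`: the recursion `x₁ P_k - δ P_k = (k + 1) P_{k+1}`.
-/

open Finsupp

noncomputable def evenPartSign (α : ℕ →₀ ℕ) : ℚ :=
  (-1) ^ (α.sum fun i a => if Even i then a else 0)

/-- Macdonald's `z_α`, so that `cauchyNumber k α = k! / zFactor α`. -/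
noncomputable def zFactor (α : ℕ →₀ ℕ) : ℚ :=
  α.prod fun i a => (a.factorial : ℚ) * (i : ℚ) ^ a

theorem mem_partitionSymbols {k : ℕ} {α : ℕ →₀ ℕ} :
    α ∈ partitionSymbols k ↔ α 0 = 0 ∧ weight id α = k := by
  have hw : (α.sum fun i a => i * a) = weight id α := by
    simp only [weight_apply, id, smul_eq_mul, mul_comm]
  rw [partitionSymbols, Finset.mem_filter, Finset.mem_finsupp_iff, hw, and_iff_right_iff_imp]
  rintro ⟨h0, rfl⟩
  refine ⟨fun i hi => Finset.mem_range_succ_iff.2 (le_weight_of_ne_zero' id (mem_support_iff.1 hi)),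
    fun i _ => Finset.mem_range_succ_iff.2 ?_⟩
  rcases eq_or_ne i 0 with rfl | hi
  · simp [h0]
  · exact le_weight id hi α

theorem support_subset_range_of_mem_partitionSymbols {k : ℕ} {α : ℕ →₀ ℕ}
    (h : α ∈ partitionSymbols k) : α.support ⊆ Finset.range (k + 1) :=
  (Finset.mem_finsupp_iff.1 (Finset.mem_filter.1 h).1).1

theorem partitionSymbols_zero : partitionSymbols 0 = {0} := by
  ext α
  rw [mem_partitionSymbols, Finset.mem_singleton]
  refine ⟨fun ⟨h0, hw⟩ => ?_, by rintro rfl; simp⟩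
  ext i
  rcases eq_or_ne i 0 with rfl | hi
  · exact h0
  · simpa [hw] using le_weight id hi α

theorem add_single_mem_partitionSymbols_iff {j : ℕ} (hj : j ≠ 0) (k : ℕ) (γ : ℕ →₀ ℕ) :
    γ + single j 1 ∈ partitionSymbols (k + j) ↔ γ ∈ partitionSymbols k := by
  simp [mem_partitionSymbols, hj, weight_single]

theorem evenPartSign_add (α β : ℕ →₀ ℕ) :
    evenPartSign (α + β) = evenPartSign α * evenPartSign β := by
  rw [evenPartSign, evenPartSign, evenPartSign, ← pow_add,
    sum_add_index' (fun _ => by simp) fun _ _ _ => by split_ifs <;> simp]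

theorem evenPartSign_single (j : ℕ) : evenPartSign (single j 1) = (-1) ^ (j + 1) := by
  rw [evenPartSign, sum_single_index (by simp)]
  rcases Nat.even_or_odd j with h | h
  · simp [h, pow_succ, h.neg_one_pow]
  · simp [Nat.not_even_iff_odd.2 h, pow_succ, h.neg_one_pow]

theorem zFactor_add_single (γ : ℕ →₀ ℕ) (j : ℕ) :
    zFactor (γ + single j 1) = j * (γ j + 1) * zFactor γ := by
  have hg : ∀ i : ℕ, ((0 : ℕ).factorial : ℚ) * (i : ℚ) ^ 0 = 1 := by simp
  rw [zFactor, zFactor, ← mul_prod_erase' _ j _ hg, ← mul_prod_erase' γ j _ hg, erase_add,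
    erase_single, add_zero]
  simp only [Finsupp.coe_add, Pi.add_apply, single_eq_same, Nat.factorial_succ]
  push_cast
  ring

theorem MvPolynomial.derivation_eq_sum_pderiv {R σ : Type*} [CommSemiring R]
    (D : Derivation R (MvPolynomial σ R) (MvPolynomial σ R)) {f : MvPolynomial σ R}
    {s : Finset σ} (hs : f.vars ⊆ s) : D f = ∑ i ∈ s, D (X i) * pderiv i f := by
  classical
  let D' : Derivation R (MvPolynomial σ R) (MvPolynomial σ R) := ∑ i ∈ s, D (X i) • pderiv i
  have hD' : ∀ g, D' g = ∑ i ∈ s, D (X i) * pderiv i g := fun g => by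
    rw [← Derivation.coeFnAddMonoidHom_apply D', map_sum, Finset.sum_apply]
    simp only [Derivation.coeFnAddMonoidHom_apply, Derivation.smul_apply, smul_eq_mul]
  rw [derivation_eq_of_forall_mem_vars (D₂ := D') fun j hj => by
    simp [hD', pderiv_X, Pi.single_apply, hs hj], hD']

theorem coeff_δ {f : MvPolynomial ℕ ℚ} {s : Finset ℕ} (hs : f.vars ⊆ s) (β : ℕ →₀ ℕ) :
    coeff β (δ f) = ∑ i ∈ s, if β (i + 1) = 0 then 0 else
      i * (β i + 1) * coeff (β - single (i + 1) 1 + single i 1) f := by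
  rw [derivation_eq_sum_pderiv δ hs, coeff_sum]
  refine Finset.sum_congr rfl fun i _ => ?_
  rw [δ, mkDerivation_X, ← map_natCast C, mul_assoc, coeff_C_mul, coeff_X_mul', coeff_pderiv]
  split_ifs <;> simp_all [tsub_apply]
  ring

theorem apply_one_add_sum_range_eq_of_mem_partitionSymbols {k : ℕ} {β : ℕ →₀ ℕ}
    (h : β ∈ partitionSymbols (k + 1)) :
    β 1 + ∑ i ∈ Finset.range k, (i + 2) * β (i + 2) = k + 1 := by
  obtain ⟨-, hw⟩ := mem_partitionSymbols.1 h
  rw [weight_apply, sum_of_support_subset β (support_subset_range_of_mem_partitionSymbols h)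
    (fun i c => c • id i) (fun _ _ => zero_smul _ _), Finset.sum_range_succ',
    Finset.sum_range_succ'] at hw
  simp only [smul_eq_mul, id, add_assoc, Nat.reduceAdd, mul_comm (β _)] at hw
  omega

/-- The closed form of `j_k / k!`. -/
noncomputable def scaledCauchySum (k : ℕ) : MvPolynomial ℕ ℚ :=
  ∑ α ∈ partitionSymbols k, monomial α (evenPartSign α / zFactor α)

theorem coeff_scaledCauchySum (k : ℕ) (β : ℕ →₀ ℕ) :
    coeff β (scaledCauchySum k) =
      if β ∈ partitionSymbols k then evenPartSign β / zFactor β else 0 := by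
  simp [scaledCauchySum, coeff_sum, coeff_monomial]

theorem scaledCauchySum_zero : scaledCauchySum 0 = 1 := by
  simp [scaledCauchySum, partitionSymbols_zero, evenPartSign, zFactor]

theorem vars_scaledCauchySum_subset (k : ℕ) : (scaledCauchySum k).vars ⊆ Finset.range (k + 1) := by
  refine (vars_sum_subset _ _).trans (Finset.biUnion_subset.2 fun α hα => ?_)
  by_cases hr : evenPartSign α / zFactor α = 0
  · simp [hr]
  · rw [vars_monomial hr]
    exact support_subset_range_of_mem_partitionSymbols hα

theorem coeff_add_single_scaledCauchySum {j : ℕ} (hj : j ≠ 0) (k : ℕ) (γ : ℕ →₀ ℕ) :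
    coeff (γ + single j 1) (scaledCauchySum (k + j)) * (j * (γ j + 1)) =
      (-1) ^ (j + 1) * coeff γ (scaledCauchySum k) := by
  have hm : (j : ℚ) * (γ j + 1) ≠ 0 := by positivity
  simp only [coeff_scaledCauchySum, add_single_mem_partitionSymbols_iff hj]
  split_ifs
  · rw [evenPartSign_add, evenPartSign_single, zFactor_add_single, mul_comm _ (zFactor γ),
      ← div_div, div_mul_cancel₀ _ hm, mul_comm, mul_div_assoc]
  · simp

theorem coeff_sub_single_one_scaledCauchySum {β : ℕ →₀ ℕ} (h : β 1 ≠ 0) (k : ℕ) :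
    coeff (β - single 1 1) (scaledCauchySum k) = β 1 * coeff β (scaledCauchySum (k + 1)) := by
  have key := coeff_add_single_scaledCauchySum one_ne_zero k (β - single 1 1)
  have hβ1 : (((β - single 1 1 : ℕ →₀ ℕ) 1 : ℕ) : ℚ) + 1 = β 1 := by
    rw [tsub_apply, single_eq_same]; norm_cast; omega
  rw [sub_add_single_one_cancel h, hβ1] at key
  linear_combination -key

theorem coeff_sub_single_succ_add_single_scaledCauchySum {β : ℕ →₀ ℕ} {i : ℕ} (hi : i ≠ 0)
    (h : β (i + 1) ≠ 0) (k : ℕ) :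
    i * (β i + 1) * coeff (β - single (i + 1) 1 + single i 1) (scaledCauchySum k) =
      -((i + 1) * β (i + 1)) * coeff β (scaledCauchySum (k + 1)) := by
  set γ := β - single (i + 1) 1 + single i 1
  have hγ : γ + single (i + 1) 1 = β + single i 1 := by
    rw [add_right_comm, sub_add_single_one_cancel h]
  have hγi : ((γ (i + 1) : ℕ) : ℚ) + 1 = β (i + 1) := by
    simp only [γ, Finsupp.coe_add, Pi.add_apply, tsub_apply, single_eq_same,
      single_eq_of_ne (Nat.succ_ne_self i)]
    norm_cast; omega
  have h₁ := coeff_add_single_scaledCauchySum (Nat.succ_ne_zero i) k γ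
  have h₂ := coeff_add_single_scaledCauchySum hi (k + 1) β
  rw [hγ, hγi, show k + (i + 1) = k + 1 + i by omega] at h₁
  push_cast at h₁
  rcases neg_one_pow_eq_or ℚ (i + 1) with hε | hε <;> rw [pow_succ, hε] at h₁ <;> rw [hε] at h₂
  · linear_combination (i * (β i + 1) : ℚ) * h₁ - ((i + 1) * β (i + 1) : ℚ) * h₂
  · linear_combination ((i + 1) * β (i + 1) : ℚ) * h₂ - (i * (β i + 1) : ℚ) * h₁

theorem X_one_mul_sub_δ_scaledCauchySum (k : ℕ) :
    X 1 * scaledCauchySum k - δ (scaledCauchySum k) =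
      ((k + 1 : ℕ) : ℚ) • scaledCauchySum (k + 1) := by
  ext β
  have hX : coeff β (X 1 * scaledCauchySum k) = β 1 * coeff β (scaledCauchySum (k + 1)) := by
    rw [coeff_X_mul']
    split_ifs with h <;> rw [Finsupp.mem_support_iff] at h
    · exact coeff_sub_single_one_scaledCauchySum h k
    · simp [not_not.1 h]
  have hδ : coeff β (δ (scaledCauchySum k)) =
      -∑ i ∈ Finset.range k, ((i + 2 : ℕ) * β (i + 2) : ℚ) * coeff β (scaledCauchySum (k + 1)) := by
    rw [coeff_δ (vars_scaledCauchySum_subset k), Finset.sum_range_succ', ← Finset.sum_neg_distrib]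
    simp only [Nat.cast_zero, zero_mul, ite_self, add_zero]
    refine Finset.sum_congr rfl fun i _ => ?_
    split_ifs with h
    · simp [h]
    · rw [coeff_sub_single_succ_add_single_scaledCauchySum (by omega) h]
      push_cast
      ring_nf
  rw [coeff_sub, hX, hδ, coeff_smul, smul_eq_mul, ← Finset.sum_mul]
  by_cases hmem : β ∈ partitionSymbols (k + 1)
  · have hsum : (β 1 : ℚ) + ∑ i ∈ Finset.range k, ((i + 2 : ℕ) * β (i + 2) : ℚ) = (k + 1 : ℕ) := by
      exact_mod_cast apply_one_add_sum_range_eq_of_mem_partitionSymbols hmem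
    linear_combination coeff β (scaledCauchySum (k + 1)) * hsum
  · simp [coeff_scaledCauchySum, hmem]

theorem cauchyJ_eq_factorial_smul_scaledCauchySum (k : ℕ) :
    cauchyJ k = (k.factorial : ℚ) • scaledCauchySum k := by
  induction k with
  | zero => simp [cauchyJ, scaledCauchySum_zero]
  | succ k ih =>
    rw [cauchyJ, ih, mul_smul_comm, Derivation.map_smul, ← smul_sub,
      X_one_mul_sub_δ_scaledCauchySum, smul_smul, Nat.factorial_succ, Nat.cast_mul, mul_comm]

theorem cauchyJ_eq_sum_partitionSymbols_general (k : ℕ) :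
    cauchyJ k =
      ∑ α ∈ partitionSymbols k,
        monomial α
          ((-1 : ℚ) ^ (α.sum fun i a => if Even i then a else 0) * cauchyNumber k α) := by
  rw [cauchyJ_eq_factorial_smul_scaledCauchySum, scaledCauchySum, Finset.smul_sum]
  refine Finset.sum_congr rfl fun α _ => ?_
  rw [smul_monomial, smul_eq_mul, cauchyNumber, evenPartSign, zFactor, mul_div_left_comm]

/-- Closed form of the Cauchy polynomials:
`jₖ = ∑_{α ⊨ k} (−1)^{α 2 + α 4 + ⋯} · h(α) · ∏ i, xᵢ ^ α i`;
equivalently, the coefficient of `∏ i, xᵢ ^ α i` in `jₖ` is `(−1)^{α 2 + α 4 + ⋯} h(α)` for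
every partition symbol `α` of `k`, and all other coefficients vanish. -/
theorem cauchyJ_eq_sum_partitionSymbols (k : ℕ) (hk : 1 ≤ k) :
    cauchyJ k =
      ∑ α ∈ partitionSymbols k,
        monomial α
          ((-1 : ℚ) ^ (α.sum fun i a => if Even i then a else 0) * cauchyNumber k α) :=
  cauchyJ_eq_sum_partitionSymbols_general k
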